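/- arXiv:1805.11596 — 2 statements merged into one kernel-verified Lean document; each statement's English description precedes it below -/
import Mathlib

section
/- Let D ∈ ℝ^{N×M}, Γ, Γ̂ ∈ ℝ^M, Y ∈ ℝ^N with ‖Y - DΓ‖₂ ≤ ε and ‖Y - DΓ̂‖₂ ≤ ε, and suppose (1-δ)·‖Γ̂ - Γ‖₂² ≤ ‖D(Γ̂-Γ)‖₂² for some 0 ≤ δ < 1. Let w ∈ ℝ^M, ω ∈ ℝ with O := w^T Γ + ω > 0. If δ < 1 - (2‖w‖₂ ε / O)², then w^T Γ̂ + ω > 0. -/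
open Finset

noncomputable def dot {n : ℕ} (w v : Fin n → ℝ) : ℝ := ∑ i, w i * v i

noncomputable def l2 {n : ℕ} (v : Fin n → ℝ) : ℝ := Real.sqrt (∑ i, (v i) ^ 2)

noncomputable def linf {n : ℕ} (v : Fin n → ℝ) : ℝ := ⨆ i, |v i|

noncomputable def l0 {n : ℕ} (v : Fin n → ℝ) : ℕ := (Finset.univ.filter (fun i => v i ≠ 0)).card

noncomputable def supp {n : ℕ} (v : Fin n → ℝ) : Finset (Fin n) := Finset.univ.filter (fun i => v i ≠ 0)

noncomputable def col {N M : ℕ} (D : Matrix (Fin N) (Fin M) ℝ) (j : Fin M) : Fin N → ℝ :=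
  fun i => D i j

lemma l2_nonneg' {n : ℕ} (v : Fin n → ℝ) : (0:ℝ) ≤ l2 v := Real.sqrt_nonneg _

lemma l2_sq' {n : ℕ} (v : Fin n → ℝ) : (l2 v) ^ 2 = ∑ i, (v i) ^ 2 :=
  Real.sq_sqrt (Finset.sum_nonneg fun i _ => sq_nonneg _)

lemma l2_triangle' {n : ℕ} (a b : Fin n → ℝ) : l2 (a - b) ≤ l2 a + l2 b := by
  have ha : l2 a = ‖(WithLp.equiv 2 (Fin n → ℝ)).symm a‖ := by
    rw [l2, EuclideanSpace.norm_eq]; simp [sq_abs]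
  have hb : l2 b = ‖(WithLp.equiv 2 (Fin n → ℝ)).symm b‖ := by
    rw [l2, EuclideanSpace.norm_eq]; simp [sq_abs]
  have hab : l2 (a - b) = ‖(WithLp.equiv 2 (Fin n → ℝ)).symm a - (WithLp.equiv 2 (Fin n → ℝ)).symm b‖ := by
    rw [l2, EuclideanSpace.norm_eq]; simp [sq_abs]
  rw [ha, hb, hab]; exact norm_sub_le _ _

theorem stmt3 {N M : ℕ} (D : Matrix (Fin N) (Fin M) ℝ) (Γ Γhat : Fin M → ℝ)
    (Y : Fin N → ℝ) (ε δ : ℝ) (w : Fin M → ℝ) (ω : ℝ)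
    (hY1 : l2 (Y - D.mulVec Γ) ≤ ε) (hY2 : l2 (Y - D.mulVec Γhat) ≤ ε)
    (hδ0 : 0 ≤ δ) (hδ1 : δ < 1)
    (hrip : (1 - δ) * (l2 (Γhat - Γ)) ^ 2 ≤ (l2 (D.mulVec (Γhat - Γ))) ^ 2)
    (hO : dot w Γ + ω > 0)
    (hδ : δ < 1 - (2 * l2 w * ε / (dot w Γ + ω)) ^ 2) :
    dot w Γhat + ω > 0 := by
  set O := dot w Γ + ω with hOdef
  have hε0 : 0 ≤ ε := le_trans (l2_nonneg' _) hY1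
  -- ‖D(Γhat - Γ)‖ ≤ 2ε
  have hDu : l2 (D.mulVec (Γhat - Γ)) ≤ 2 * ε := by
    have heq : D.mulVec (Γhat - Γ) = (Y - D.mulVec Γ) - (Y - D.mulVec Γhat) := by
      rw [Matrix.mulVec_sub]; abel
    calc l2 (D.mulVec (Γhat - Γ)) = l2 ((Y - D.mulVec Γ) - (Y - D.mulVec Γhat)) := by rw [heq]
      _ ≤ l2 (Y - D.mulVec Γ) + l2 (Y - D.mulVec Γhat) := l2_triangle' _ _
      _ ≤ 2 * ε := by linarith
  have hδpos : 0 < 1 - δ := by linarith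
  -- (1-δ)‖u‖² ≤ 4ε²
  have hu2 : (1 - δ) * (l2 (Γhat - Γ)) ^ 2 ≤ 4 * ε ^ 2 := by
    have := sq_le_sq' (by linarith [l2_nonneg' (D.mulVec (Γhat - Γ))]) hDu
    nlinarith
  -- Cauchy-Schwarz
  have hcs : (dot w (Γhat - Γ)) ^ 2 ≤ (l2 w) ^ 2 * (l2 (Γhat - Γ)) ^ 2 := by
    rw [l2_sq', l2_sq', dot]
    exact Finset.sum_mul_sq_le_sq_mul_sq Finset.univ w (Γhat - Γ)
  -- from hδ : (2 l2 w ε)² < (1-δ) O²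
  have hkey : (2 * l2 w * ε) ^ 2 < (1 - δ) * O ^ 2 := by
    have h1 : (2 * l2 w * ε / O) ^ 2 < 1 - δ := by linarith
    have h2 : (2 * l2 w * ε / O) ^ 2 * O ^ 2 < (1 - δ) * O ^ 2 :=
      (mul_lt_mul_of_pos_right h1 (by positivity))
    calc (2 * l2 w * ε) ^ 2 = (2 * l2 w * ε / O) ^ 2 * O ^ 2 := by
          field_simp
      _ < (1 - δ) * O ^ 2 := h2
  -- combine: (1-δ)(dot w u)² ≤ (l2 w)² 4 ε² = (2 l2 w ε)² < (1-δ) O²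
  have hdu : (dot w (Γhat - Γ)) ^ 2 < O ^ 2 := by
    have hw0 : 0 ≤ (l2 w) ^ 2 := sq_nonneg _
    nlinarith
  have habs1 : dot w (Γhat - Γ) > -O := by nlinarith
  have hdot : dot w (Γhat - Γ) = dot w Γhat - dot w Γ := by
    simp [dot, mul_sub, Finset.sum_sub_distrib]
  rw [hdot] at habs1
  linarith
end

section
/- Let D ∈ ℝ^{N×M}, Γ, Γ̂ ∈ ℝ^M, Y ∈ ℝ^N with ‖Y - DΓ‖₂ ≤ ε, ‖Y - DΓ̂‖₂ ≤ ε, and (1-δ)·‖Γ̂-Γ‖₂² ≤ ‖D(Γ̂-Γ)‖₂² for 0 ≤ δ < 1. Let (w_v, ω_v), v = 1,...,L, be linear classifiers, u the correct class with min_{v≠u} [(w_u^TΓ+ω_u) - (w_v^TΓ+ω_v)] ≥ O > 0, and let φ = max_{v≠u} ‖w_u - w_v‖₂. If δ < 1 - (2φε/O)², then for all v ≠ u: w_u^TΓ̂ + ω_u > w_v^TΓ̂ + ω_v. -/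
open Finset

/-!
Both `DΓ` and `DΓ̂` lie within `ε` of `Y`, so `‖D(Γ̂ - Γ)‖ ≤ 2ε`, and the lower isometry bound turns
this into `√(1 - δ) ‖Γ̂ - Γ‖ ≤ 2ε`. The hypothesis on `δ` makes `φ ‖Γ̂ - Γ‖ < O`, and by
Cauchy–Schwarz moving from `Γ` to `Γ̂` changes each score difference
`(w_u - w_v)ᵀΓ + (ω_u - ω_v) ≥ O` by at most `‖w_u - w_v‖ ‖Γ̂ - Γ‖ ≤ φ ‖Γ̂ - Γ‖`.
-/

open scoped RealInnerProductSpace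

theorem l2_eq_norm {n : ℕ} (v : Fin n → ℝ) : l2 v = ‖WithLp.toLp 2 v‖ := by
  simp [l2, EuclideanSpace.norm_eq]

theorem dot_eq_inner {n : ℕ} (w v : Fin n → ℝ) :
    dot w v = ⟪WithLp.toLp 2 w, WithLp.toLp 2 v⟫ := by
  simp [dot, PiLp.inner_apply, mul_comm]

theorem dot_sub_left {n : ℕ} (a b c : Fin n → ℝ) : dot (a - b) c = dot a c - dot b c := by
  simp [dot, sub_mul, Finset.sum_sub_distrib]

theorem norm_map_sub_le_of_norm_sub_le {E F 𝓕 : Type*} [AddGroup E] [SeminormedAddGroup F]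
    [FunLike 𝓕 E F] [AddMonoidHomClass 𝓕 E F] (D : 𝓕) {x x' : E} {y : F} {ε : ℝ}
    (hx : ‖y - D x‖ ≤ ε) (hx' : ‖y - D x'‖ ≤ ε) : ‖D (x' - x)‖ ≤ 2 * ε := by
  rw [map_sub]
  calc ‖D x' - D x‖ ≤ ‖D x' - y‖ + ‖y - D x‖ := norm_sub_le_norm_sub_add_norm_sub _ _ _
    _ ≤ 2 * ε := by rw [norm_sub_rev]; linarith

theorem mul_lt_of_mul_sq_le_sq {c d e φ O : ℝ} (hO : 0 < O) (hd : c * d ^ 2 ≤ e ^ 2)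
    (hc : (φ * e / O) ^ 2 < c) : φ * d < O := by
  have hc0 : 0 < c := (sq_nonneg _).trans_lt hc
  have hsq : (φ * d) ^ 2 * c < O ^ 2 * c :=
    calc (φ * d) ^ 2 * c = φ ^ 2 * (c * d ^ 2) := by ring
      _ ≤ φ ^ 2 * e ^ 2 := by gcongr
      _ = (φ * e / O) ^ 2 * O ^ 2 := by field_simp
      _ < c * O ^ 2 := by gcongr
      _ = O ^ 2 * c := mul_comm _ _
  exact (abs_lt.mp (abs_lt_of_sq_lt_sq (lt_of_mul_lt_mul_right hsq hc0.le) hO.le)).2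

theorem inner_add_pos_of_margin {E : Type*} [SeminormedAddCommGroup E] [InnerProductSpace ℝ E]
    {w x x' : E} {b O φ : ℝ} (hmargin : O ≤ ⟪w, x⟫ + b) (hw : ‖w‖ ≤ φ)
    (hclose : φ * ‖x' - x‖ < O) : 0 < ⟪w, x'⟫ + b := by
  have hcs : -⟪w, x' - x⟫ ≤ φ * ‖x' - x‖ :=
    calc -⟪w, x' - x⟫ = ⟪-w, x' - x⟫ := (inner_neg_left _ _).symm
      _ ≤ ‖w‖ * ‖x' - x‖ := by simpa using real_inner_le_norm (-w) (x' - x)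
      _ ≤ φ * ‖x' - x‖ := by gcongr
  rw [inner_sub_right] at hcs
  linarith

theorem inner_add_pos_of_lower_isometry {E F 𝓕 : Type*}
    [SeminormedAddCommGroup E] [InnerProductSpace ℝ E] [SeminormedAddGroup F]
    [FunLike 𝓕 E F] [AddMonoidHomClass 𝓕 E F] (D : 𝓕) {x x' w : E} {y : F} {ε δ b O φ : ℝ}
    (hx : ‖y - D x‖ ≤ ε) (hx' : ‖y - D x'‖ ≤ ε)
    (hrip : (1 - δ) * ‖x' - x‖ ^ 2 ≤ ‖D (x' - x)‖ ^ 2) (hO : 0 < O)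
    (hmargin : O ≤ ⟪w, x⟫ + b) (hw : ‖w‖ ≤ φ) (hδ : δ < 1 - (2 * φ * ε / O) ^ 2) :
    0 < ⟪w, x'⟫ + b := by
  have hD := norm_map_sub_le_of_norm_sub_le D hx hx'
  have hrip' : (1 - δ) * ‖x' - x‖ ^ 2 ≤ (2 * ε) ^ 2 :=
    hrip.trans (pow_le_pow_left₀ (norm_nonneg _) hD 2)
  refine inner_add_pos_of_margin hmargin hw (mul_lt_of_mul_sq_le_sq hO hrip' ?_)
  rw [show φ * (2 * ε) = 2 * φ * ε by ring]
  linarith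

theorem stmt6_general {N M L : ℕ} (D : Matrix (Fin N) (Fin M) ℝ) (Γ Γhat : Fin M → ℝ)
    (Y : Fin N → ℝ) (ε δ : ℝ)
    (w : Fin L → Fin M → ℝ) (ωs : Fin L → ℝ) (u : Fin L) (O φ : ℝ)
    (hY1 : l2 (Y - D.mulVec Γ) ≤ ε) (hY2 : l2 (Y - D.mulVec Γhat) ≤ ε)
    (hrip : (1 - δ) * (l2 (Γhat - Γ)) ^ 2 ≤ (l2 (D.mulVec (Γhat - Γ))) ^ 2)
    (hO : 0 < O)
    (hmargin : ∀ v : Fin L, v ≠ u → (dot (w u) Γ + ωs u) - (dot (w v) Γ + ωs v) ≥ O)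
    (hφ : ∀ v : Fin L, v ≠ u → l2 (w u - w v) ≤ φ)
    (hδ : δ < 1 - (2 * φ * ε / O) ^ 2) :
    ∀ v : Fin L, v ≠ u → dot (w u) Γhat + ωs u > dot (w v) Γhat + ωs v := by
  intro v hv
  have key := inner_add_pos_of_lower_isometry (Matrix.toLpLin 2 2 D)
    (w := WithLp.toLp 2 (w u - w v)) (b := ωs u - ωs v)
    (by simpa [l2_eq_norm, Matrix.toLpLin_apply] using hY1)
    (by simpa [l2_eq_norm, Matrix.toLpLin_apply] using hY2)
    (by simpa [l2_eq_norm, Matrix.toLpLin_apply, Matrix.mulVec_sub] using hrip) hO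
    (by rw [← dot_eq_inner, dot_sub_left]; linarith [hmargin v hv])
    (by rw [← l2_eq_norm]; exact hφ v hv) hδ
  rw [← dot_eq_inner, dot_sub_left] at key
  linarith

theorem stmt6 {N M L : ℕ} (D : Matrix (Fin N) (Fin M) ℝ) (Γ Γhat : Fin M → ℝ)
    (Y : Fin N → ℝ) (ε δ : ℝ)
    (w : Fin L → Fin M → ℝ) (ωs : Fin L → ℝ) (u : Fin L) (O φ : ℝ)
    (hY1 : l2 (Y - D.mulVec Γ) ≤ ε) (hY2 : l2 (Y - D.mulVec Γhat) ≤ ε)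
    (hδ0 : 0 ≤ δ) (hδ1 : δ < 1)
    (hrip : (1 - δ) * (l2 (Γhat - Γ)) ^ 2 ≤ (l2 (D.mulVec (Γhat - Γ))) ^ 2)
    (hO : 0 < O)
    (hmargin : ∀ v : Fin L, v ≠ u → (dot (w u) Γ + ωs u) - (dot (w v) Γ + ωs v) ≥ O)
    (hφ : ∀ v : Fin L, v ≠ u → l2 (w u - w v) ≤ φ)
    (hδ : δ < 1 - (2 * φ * ε / O) ^ 2) :
    ∀ v : Fin L, v ≠ u → dot (w u) Γhat + ωs u > dot (w v) Γhat + ωs v :=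
  stmt6_general D Γ Γhat Y ε δ w ωs u O φ hY1 hY2 hrip hO hmargin hφ hδ
end
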